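/- Let d ≥ 2 and let C ⊂ ℝ^d be a strictly convex analytic body with 0 in its interior, with support function P(t) = sup_{x∈C}(t,x). For an invertible linear map L of ℝ^d set f_L(δ) = P(L(1,δ,0,…,0)) and f̃_L(δ) = P(L(−1,−δ,0,…,0)). Then exactly one of the following alternatives holds: (i) there exist an invertible linear map L of ℝ^d and δ, δ′ ∈ ℝ such that f_L″(δ) · f̃_L″(δ′) ≠ f̃_L″(δ) · f_L″(δ′); or (ii) C has a center of symmetry, i.e. there exists v ∈ ℝ^d such that C = 2v − C. -/

import Mathlib

open MeasureTheory Filter Pointwise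
open scoped ENNReal RealInnerProductSpace Real

noncomputable section

abbrev Torus (d : ℕ) := Fin d → AddCircle (1 : ℝ)

def torusProj {d : ℕ} (v : EuclideanSpace ℝ (Fin d)) : Torus d :=
  fun i => (v i : AddCircle (1 : ℝ))

def suppFn {d : ℕ} (C : Set (EuclideanSpace ℝ (Fin d))) (t : EuclideanSpace ℝ (Fin d)) : ℝ :=
  sSup ((fun x => (inner ℝ t x : ℝ)) '' C)

structure StrictlyConvexAnalyticBody (d : ℕ) where
  carrier : Set (EuclideanSpace ℝ (Fin d))
  isCompact : IsCompact carrier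
  convex : Convex ℝ carrier
  nonemptyInterior : (interior carrier).Nonempty
  strictConvex : StrictConvex ℝ carrier
  analyticSupport : AnalyticOnNhd ℝ (suppFn carrier) {(0 : EuclideanSpace ℝ (Fin d))}ᶜ
  posCurvature : ∀ t w : EuclideanSpace ℝ (Fin d), t ≠ 0 → w ≠ 0 → (inner ℝ t w : ℝ) = 0 →
    0 < iteratedDeriv 2 (fun s : ℝ => suppFn carrier (t + s • w)) 0

def discrepancy (d : ℕ) (C : Set (EuclideanSpace ℝ (Fin d))) (r : ℝ)
    (α x : Torus d) (N : ℕ) : ℝ :=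
  (∑ n ∈ Finset.range N,
    Set.indicator (torusProj '' (r • C)) (fun _ => (1:ℝ)) (x + n • α))
    - N * (volume (r • C)).toReal

def lamMeasure (d : ℕ) (a b : ℝ) : Measure (ℝ × Torus d × Torus d) :=
  ((volume (Set.Icc a b))⁻¹ • volume.restrict (Set.Icc a b)).prod
    ((volume : Measure (Torus d)).prod (volume : Measure (Torus d)))


/-- The vector `(u, v, 0, …, 0)` of `ℝ^d`. -/
def pairVec (d : ℕ) (u v : ℝ) : EuclideanSpace ℝ (Fin d) :=
  (EuclideanSpace.equiv (Fin d) ℝ).symm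
    (fun i => if (i : ℕ) = 0 then u else if (i : ℕ) = 1 then v else 0)

/-- `f_L(δ) = P(L(1,δ,0,…,0))`. -/
def fL (d : ℕ) (C : Set (EuclideanSpace ℝ (Fin d)))
    (L : EuclideanSpace ℝ (Fin d) ≃ₗ[ℝ] EuclideanSpace ℝ (Fin d)) (δ : ℝ) : ℝ :=
  suppFn C (L (pairVec d 1 δ))

/-- `f̃_L(δ) = P(L(-1,-δ,0,…,0))`. -/
def fLtilde (d : ℕ) (C : Set (EuclideanSpace ℝ (Fin d)))
    (L : EuclideanSpace ℝ (Fin d) ≃ₗ[ℝ] EuclideanSpace ℝ (Fin d)) (δ : ℝ) : ℝ :=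
  suppFn C (L (-pairVec d 1 δ))



/-!
Write `D(t, b)` for the second derivative of the support function `P` at `t` along `b`.
Since `P` is positively homogeneous, `D(t, r • b + c • t) = r² D(t, b)`; with positive curvature
in the directions orthogonal to `t` this gives `D(t, b) > 0` for every `b` transversal to `t`.
Alternative (i) fails exactly when, on every line `a + ℝ b` missing the origin, the ratio
`ρ(t, b) = D(-t, b) / D(t, b)` is constant. By the scaling rule `ρ(t, b)` depends on `b` only
through the plane spanned by `t` and `b`, so comparing the lines `a + ℝ b` and `b + ℝ a`, which
meet at `a + b`, shows `ρ(a, b) = ρ(b, a)`; with `ρ(-a, b) = ρ(a, b)⁻¹` this forces `ρ = 1`.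
So `t ↦ P(-t) - P(t)` has vanishing second derivative on every such line; being homogeneous, it
is then a linear form `⟪u, t⟫`, which says precisely that `C` is symmetric about `-u / 2`.
-/

open Set Topology

section Calculus

variable {F : ℝ → ℝ}

lemma iteratedDeriv_two_eq_deriv_deriv (f : ℝ → ℝ) : iteratedDeriv 2 f = deriv (deriv f) := by
  rw [iteratedDeriv_succ, iteratedDeriv_one]

lemma differentiable_deriv_of_contDiff_two (hF : ContDiff ℝ 2 F) : Differentiable ℝ (deriv F) :=
  ((contDiff_succ_iff_deriv (n := 1)).1 hF).2.2.differentiable (by norm_num)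

/-- For `F s = P (t + s • b)` with `P` positively homogeneous, this function agrees with
`s ↦ P (t + s • (r • b + c • t))` near `0`. -/
theorem iteratedDeriv_two_perspective (hF : ContDiff ℝ 2 F) (r c : ℝ) :
    iteratedDeriv 2 (fun s => (1 + c * s) * F (r * s / (1 + c * s))) 0 =
      r ^ 2 * iteratedDeriv 2 F 0 := by
  have hF₁ : Differentiable ℝ F := hF.differentiable (by norm_num)
  have hF₂ := differentiable_deriv_of_contDiff_two hF
  set μ : ℝ → ℝ := fun s => 1 + c * s
  set u : ℝ → ℝ := fun s => r * s / μ s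
  have hμ : ∀ s, HasDerivAt μ c s := fun s =>
    (((hasDerivAt_id' s).const_mul c).const_add 1).congr_deriv (mul_one c)
  have hu : ∀ s, μ s ≠ 0 → HasDerivAt u (r / μ s ^ 2) s := fun s hs =>
    (((hasDerivAt_id' s).const_mul r).div (hμ s) hs).congr_deriv
      (by simp only [μ]; field_simp; ring)
  have hnhds : ∀ᶠ s in 𝓝 0, μ s ≠ 0 := (hμ 0).continuousAt.eventually_ne (by simp [μ])
  have hderiv : deriv (fun s => μ s * F (u s)) =ᶠ[𝓝 0]
      fun s => c * F (u s) + r * deriv F (u s) / μ s := by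
    filter_upwards [hnhds] with s hs
    refine ((hμ s).mul ((hF₁ _).hasDerivAt.comp s (hu s hs))).deriv.trans ?_
    field_simp
    simp only [Function.comp_apply]; ring
  have hμ0 : μ 0 = 1 := by simp [μ]
  have hu0 : u 0 = 0 := by simp [u]
  have hu' : HasDerivAt u r 0 := by simpa [hμ0] using hu 0 (by simp [hμ0])
  have hsecond : HasDerivAt (fun s => c * F (u s) + r * deriv F (u s) / μ s)
      (r ^ 2 * deriv (deriv F) 0) 0 := by
    have h₁ := ((hF₁ _).hasDerivAt.comp 0 hu').const_mul c
    have h₂ := (((hF₂ _).hasDerivAt.comp 0 hu').const_mul r).div (hμ 0) (by simp [hμ0])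
    refine (h₁.add h₂).congr_deriv ?_
    simp only [Function.comp_apply, hμ0, hu0]
    ring
  rw [iteratedDeriv_two_eq_deriv_deriv, iteratedDeriv_two_eq_deriv_deriv, hderiv.deriv_eq,
    hsecond.deriv]

lemma eq_add_mul_of_iteratedDeriv_two_eq_zero (hF : ContDiff ℝ 2 F)
    (h : ∀ x, iteratedDeriv 2 F x = 0) (x : ℝ) : F x = F 0 + x * deriv F 0 := by
  have hF₁ : Differentiable ℝ F := hF.differentiable (by norm_num)
  have hconst : ∀ y, deriv F y = deriv F 0 := fun y =>
    is_const_of_deriv_eq_zero (differentiable_deriv_of_contDiff_two hF)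
      (fun z => by rw [← iteratedDeriv_two_eq_deriv_deriv]; exact h z) y 0
  have hG : ∀ y, HasDerivAt (fun z => F z - deriv F 0 * z) 0 y := fun y =>
    ((hF₁ y).hasDerivAt.sub ((hasDerivAt_id' y).const_mul (deriv F 0))).congr_deriv
      (by rw [hconst y]; ring)
  have := is_const_of_deriv_eq_zero (fun y => (hG y).differentiableAt) (fun y => (hG y).deriv) x 0
  simp only [mul_zero, sub_zero] at this
  linarith

end Calculus

section SecondLineDeriv

variable {E : Type*} [NormedAddCommGroup E] [NormedSpace ℝ E] {P : E → ℝ}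

def secondLineDeriv (P : E → ℝ) (t b : E) : ℝ :=
  iteratedDeriv 2 (fun s : ℝ => P (t + s • b)) 0

lemma iteratedDeriv_two_comp_add_smul (P : E → ℝ) (a b : E) (δ : ℝ) :
    iteratedDeriv 2 (fun s : ℝ => P (a + s • b)) δ = secondLineDeriv P (a + δ • b) b := by
  have h := congrFun (iteratedDeriv_comp_const_add 2 (fun s : ℝ => P (a + s • b)) δ) 0
  simp only [add_zero, add_smul, ← add_assoc] at h
  exact h.symm

lemma secondLineDeriv_neg_right (P : E → ℝ) (t b : E) :
    secondLineDeriv P t (-b) = secondLineDeriv P t b := by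
  have h := iteratedDeriv_comp_neg 2 (fun s : ℝ => P (t + s • b)) 0
  simp only [neg_smul, ← smul_neg, neg_zero, even_two, Even.neg_pow, one_pow, one_smul] at h
  exact h

lemma iteratedDeriv_two_comp_neg_add_smul (P : E → ℝ) (a b : E) (δ : ℝ) :
    iteratedDeriv 2 (fun s : ℝ => P (-(a + s • b))) δ =
      secondLineDeriv P (-(a + δ • b)) b := by
  have h := iteratedDeriv_two_comp_add_smul P (-a) (-b) δ
  simp only [smul_neg, ← neg_add] at h
  rw [h, secondLineDeriv_neg_right]

lemma LinearIndependent.add_smul_ne_zero {a b : E} (hab : LinearIndependent ℝ ![a, b]) (s : ℝ) :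
    a + s • b ≠ 0 := fun h =>
  one_ne_zero (LinearIndependent.pair_iff.1 hab 1 s (by rwa [one_smul])).1

lemma contDiff_comp_add_smul (hP : AnalyticOnNhd ℝ P {0}ᶜ) {a b : E}
    (hab : LinearIndependent ℝ ![a, b]) : ContDiff ℝ 2 (fun s : ℝ => P (a + s • b)) :=
  AnalyticOnNhd.contDiff fun s _ => (hP _ (hab.add_smul_ne_zero s)).comp
    (f := fun s : ℝ => a + s • b) (analyticAt_const.add (analyticAt_id.smul analyticAt_const))

lemma contDiff_comp_neg_add_smul (hP : AnalyticOnNhd ℝ P {0}ᶜ) {a b : E}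
    (hab : LinearIndependent ℝ ![a, b]) : ContDiff ℝ 2 (fun s : ℝ => P (-(a + s • b))) := by
  have h := contDiff_comp_add_smul hP (LinearIndependent.pair_neg_left_iff.2
    (LinearIndependent.pair_neg_right_iff.2 hab))
  simpa only [smul_neg, ← neg_add] using h

variable (hhom : ∀ μ : ℝ, 0 < μ → ∀ t, P (μ • t) = μ * P t) (hP : AnalyticOnNhd ℝ P {0}ᶜ)
include hhom hP

theorem secondLineDeriv_smul_add_smul {t b : E} (htb : LinearIndependent ℝ ![t, b]) (r c : ℝ) :
    secondLineDeriv P t (r • b + c • t) = r ^ 2 * secondLineDeriv P t b := by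
  have hline : (fun s : ℝ => P (t + s • (r • b + c • t))) =ᶠ[𝓝 0]
      fun s => (1 + c * s) * P (t + (r * s / (1 + c * s)) • b) := by
    have hpos : ∀ᶠ s : ℝ in 𝓝 0, 0 < 1 + c * s :=
      (continuous_const.add (continuous_const.mul continuous_id)).continuousAt.eventually
        (lt_mem_nhds (by simp))
    filter_upwards [hpos] with s hs
    rw [← hhom _ hs, smul_add (1 + c * s), smul_smul, mul_div_cancel₀ _ hs.ne']
    congr 1
    module
  rw [secondLineDeriv, hline.iteratedDeriv_eq,
    iteratedDeriv_two_perspective (contDiff_comp_add_smul hP htb)]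
  rfl

end SecondLineDeriv

section Curvature

variable {E : Type*} [NormedAddCommGroup E] [InnerProductSpace ℝ E] {P : E → ℝ}
  (hhom : ∀ μ : ℝ, 0 < μ → ∀ t, P (μ • t) = μ * P t) (hP : AnalyticOnNhd ℝ P {0}ᶜ)
  (hcurv : ∀ t w : E, t ≠ 0 → w ≠ 0 → ⟪t, w⟫ = 0 → 0 < secondLineDeriv P t w)
include hhom hP hcurv

theorem secondLineDeriv_pos {t b : E} (htb : LinearIndependent ℝ ![t, b]) :
    0 < secondLineDeriv P t b := by
  set c : ℝ := ⟪t, b⟫ / ‖t‖ ^ 2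
  have htw : LinearIndependent ℝ ![t, (-c) • t + b] :=
    (LinearIndependent.pair_add_smul_right_iff _).2 htb
  have ht : t ≠ 0 := htb.ne_zero 0
  have horth : ⟪t, (-c) • t + b⟫ = 0 := by
    rw [inner_add_right, real_inner_smul_right, real_inner_self_eq_norm_sq, neg_mul,
      div_mul_cancel₀ _ (pow_ne_zero 2 (norm_ne_zero_iff.2 ht)), neg_add_cancel]
  have hb : b = (1 : ℝ) • ((-c) • t + b) + c • t := by module
  rw [hb, secondLineDeriv_smul_add_smul hhom hP htw, one_pow, one_mul]
  exact hcurv t _ ht (htw.ne_zero 1) horth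

theorem secondLineDeriv_neg_eq_of_mul_eq
    (hprop : ∀ a b : E, LinearIndependent ℝ ![a, b] → ∀ δ δ' : ℝ,
      secondLineDeriv P (a + δ • b) b * secondLineDeriv P (-(a + δ' • b)) b =
        secondLineDeriv P (-(a + δ • b)) b * secondLineDeriv P (a + δ' • b) b)
    {a b : E} (hab : LinearIndependent ℝ ![a, b]) :
    secondLineDeriv P (-a) b = secondLineDeriv P a b := by
  let ρ : E → E → ℝ := fun t b => secondLineDeriv P (-t) b / secondLineDeriv P t b
  have hpos : ∀ {t b : E}, LinearIndependent ℝ ![t, b] → 0 < secondLineDeriv P t b :=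
    secondLineDeriv_pos hhom hP hcurv
  have hρ_line : ∀ {a b : E}, LinearIndependent ℝ ![a, b] → ∀ δ : ℝ, ρ (a + δ • b) b = ρ a b := by
    intro a b hab δ
    have h := hprop a b hab δ 0
    simp only [zero_smul, add_zero] at h
    rw [div_eq_div_iff (hpos (by simpa using hab)).ne' (hpos hab).ne']
    linarith
  have hρ_dir : ∀ {t b : E}, LinearIndependent ℝ ![t, b] → ∀ r c : ℝ, r ≠ 0 →
      ρ t (r • b + c • t) = ρ t b := by
    intro t b htb r c hr
    have h_neg : r • b + c • t = r • b + (-c) • (-t) := by module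
    simp only [ρ]
    rw [secondLineDeriv_smul_add_smul hhom hP htb, h_neg,
      secondLineDeriv_smul_add_smul hhom hP (by simpa using htb),
      mul_div_mul_left _ _ (pow_ne_zero 2 hr)]
  have hρ_symm : ∀ {a b : E}, LinearIndependent ℝ ![a, b] → ρ a b = ρ b a := by
    intro a b hab
    have hsum : LinearIndependent ℝ ![a + b, b] := LinearIndependent.pair_add_left_iff.2 hab
    calc ρ a b = ρ (a + (1 : ℝ) • b) b := (hρ_line hab 1).symm
      _ = ρ (a + b) ((-1 : ℝ) • b + (1 : ℝ) • (a + b)) := by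
        rw [one_smul, hρ_dir hsum _ _ (by norm_num)]
      _ = ρ (b + (1 : ℝ) • a) a := by congr 1 <;> module
      _ = ρ b a := hρ_line (LinearIndependent.pair_symm_iff.1 hab) 1
  have hρ_inv : ρ a b = (ρ a b)⁻¹ := by
    have hba : LinearIndependent ℝ ![b, a] := LinearIndependent.pair_symm_iff.1 hab
    calc ρ a b = ρ b ((-1 : ℝ) • a + (0 : ℝ) • b) := by
          rw [hρ_symm hab, hρ_dir hba _ _ (by norm_num)]
      _ = ρ (-a) b := by
        rw [hρ_symm (by simpa using hba)]
        congr 1; module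
      _ = (ρ a b)⁻¹ := by simp only [ρ, neg_neg, inv_div]
  have hρ_pos : 0 < ρ a b := div_pos (hpos (by simpa using hab)) (hpos hab)
  have hρ_sq : ρ a b * ρ a b = 1 := by
    have h := mul_inv_cancel₀ hρ_pos.ne'
    rwa [← hρ_inv] at h
  have hρ_one : ρ a b = 1 := (mul_self_eq_one_iff.1 hρ_sq).resolve_right (by linarith)
  exact (div_eq_one_iff_eq (hpos hab).ne').1 hρ_one

theorem secondLineDeriv_neg_eq_iff_mul_eq :
    (∀ a b : E, LinearIndependent ℝ ![a, b] → ∀ δ δ' : ℝ,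
      secondLineDeriv P (a + δ • b) b * secondLineDeriv P (-(a + δ' • b)) b =
        secondLineDeriv P (-(a + δ • b)) b * secondLineDeriv P (a + δ' • b) b) ↔
    ∀ a b : E, LinearIndependent ℝ ![a, b] → secondLineDeriv P (-a) b = secondLineDeriv P a b := by
  refine ⟨fun h a b hab => secondLineDeriv_neg_eq_of_mul_eq hhom hP hcurv h hab,
    fun h a b hab δ δ' => ?_⟩
  have hline : ∀ δ : ℝ, LinearIndependent ℝ ![a + δ • b, b] := fun δ =>
    (LinearIndependent.pair_add_smul_left_iff _).2 hab
  rw [h _ _ (hline δ), h _ _ (hline δ')]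

end Curvature

section Linearity

variable {V : Type*} [AddCommGroup V] [Module ℝ V] {h : V → ℝ}

theorem map_add_of_affine_on_lines (hsmul : ∀ (s : ℝ) t, h (s • t) = s * h t)
    (haff : ∀ a b : V, LinearIndependent ℝ ![a, b] →
      ∃ m : ℝ, ∀ δ : ℝ, h (a + δ • b) = h a + δ * m)
    (x y : V) : h (x + y) = h x + h y := by
  have h_zero : h 0 = 0 := by simpa using hsmul 0 0
  rcases eq_or_ne x 0 with rfl | hx
  · rw [zero_add, h_zero, zero_add]
  by_cases hxy : LinearIndependent ℝ ![x, y]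
  · obtain ⟨m, hm⟩ :=
      haff x ((-1 : ℝ) • x + y) ((LinearIndependent.pair_add_smul_right_iff _).2 hxy)
    have hy : h y = h x + m := by simpa using hm 1
    have hmid : h ((1 / 2 : ℝ) • (x + y)) = h x + 1 / 2 * m := by
      rw [← hm]; congr 1; module
    rw [hsmul] at hmid
    linarith
  · obtain ⟨a, rfl⟩ : ∃ a : ℝ, a • x = y := by
      simpa [LinearIndependent.pair_iff' hx] using hxy
    rw [show x + a • x = (1 + a) • x by module, hsmul, hsmul]
    ring

variable {E : Type*} [NormedAddCommGroup E] [InnerProductSpace ℝ E] [FiniteDimensional ℝ E]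
  {h : E → ℝ}

theorem exists_inner_eq_of_affine_on_lines (hsmul : ∀ (s : ℝ) t, h (s • t) = s * h t)
    (haff : ∀ a b : E, LinearIndependent ℝ ![a, b] →
      ∃ m : ℝ, ∀ δ : ℝ, h (a + δ • b) = h a + δ * m) :
    ∃ u : E, ∀ t, h t = ⟪u, t⟫ := by
  let ℓ : E →ₗ[ℝ] ℝ :=
    { toFun := h
      map_add' := map_add_of_affine_on_lines hsmul haff
      map_smul' := hsmul }
  exact ⟨(InnerProductSpace.toDual ℝ E).symm (LinearMap.toContinuousLinearMap ℓ), fun t => by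
    rw [InnerProductSpace.toDual_symm_apply]; rfl⟩

end Linearity

section OddPart

variable {E : Type*} [NormedAddCommGroup E] [InnerProductSpace ℝ E] {P : E → ℝ}

lemma neg_sub_smul_of_posHomogeneous (hhom : ∀ μ : ℝ, 0 < μ → ∀ t, P (μ • t) = μ * P t)
    (s : ℝ) (t : E) : P (-(s • t)) - P (s • t) = s * (P (-t) - P t) := by
  rcases lt_trichotomy s 0 with hs | rfl | hs
  · rw [← neg_smul, show s • t = (-s) • -t by module, hhom _ (neg_pos.2 hs),
      hhom _ (neg_pos.2 hs)]
    ring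
  · simp
  · rw [← smul_neg, hhom _ hs, hhom _ hs]
    ring

variable (hP : AnalyticOnNhd ℝ P {0}ᶜ)
include hP

lemma iteratedDeriv_two_neg_sub_comp_add_smul {a b : E} (hab : LinearIndependent ℝ ![a, b])
    (δ : ℝ) :
    iteratedDeriv 2 (fun s : ℝ => P (-(a + s • b)) - P (a + s • b)) δ =
      secondLineDeriv P (-(a + δ • b)) b - secondLineDeriv P (a + δ • b) b := by
  rw [iteratedDeriv_fun_sub (contDiff_comp_neg_add_smul hP hab).contDiffAt
    (contDiff_comp_add_smul hP hab).contDiffAt, iteratedDeriv_two_comp_neg_add_smul,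
    iteratedDeriv_two_comp_add_smul]

theorem secondLineDeriv_neg_eq_iff_exists_inner [FiniteDimensional ℝ E]
    (hhom : ∀ μ : ℝ, 0 < μ → ∀ t, P (μ • t) = μ * P t) :
    (∀ a b : E, LinearIndependent ℝ ![a, b] → secondLineDeriv P (-a) b = secondLineDeriv P a b) ↔
      ∃ u : E, ∀ t, P (-t) - P t = ⟪u, t⟫ := by
  constructor
  · intro heven
    refine exists_inner_eq_of_affine_on_lines (neg_sub_smul_of_posHomogeneous hhom)
      fun a b hab => ⟨deriv (fun s : ℝ => P (-(a + s • b)) - P (a + s • b)) 0, fun δ => ?_⟩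
    have h := eq_add_mul_of_iteratedDeriv_two_eq_zero
      ((contDiff_comp_neg_add_smul hP hab).sub (contDiff_comp_add_smul hP hab))
      (fun δ => by
        rw [iteratedDeriv_two_neg_sub_comp_add_smul hP hab,
          heven _ _ ((LinearIndependent.pair_add_smul_left_iff _).2 hab), sub_self]) δ
    simpa only [zero_smul, add_zero] using h
  · rintro ⟨u, hu⟩ a b hab
    have h := iteratedDeriv_two_neg_sub_comp_add_smul hP hab 0
    simp only [hu, inner_add_right, real_inner_smul_right, zero_smul, add_zero] at h
    rw [← sub_eq_zero, ← h]
    simp [iteratedDeriv_succ]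

end OddPart

section SupportFunction

variable {d : ℕ} {K : Set (EuclideanSpace ℝ (Fin d))}

lemma suppFn_smul (K : Set (EuclideanSpace ℝ (Fin d))) {μ : ℝ} (hμ : 0 ≤ μ)
    (t : EuclideanSpace ℝ (Fin d)) : suppFn K (μ • t) = μ * suppFn K t := by
  rw [suppFn, suppFn, ← smul_eq_mul, ← Real.sSup_smul_of_nonneg hμ, ← Set.image_smul,
    Set.image_image]
  simp only [real_inner_smul_left, smul_eq_mul]

lemma le_suppFn (hK : IsCompact K) {x : EuclideanSpace ℝ (Fin d)} (hx : x ∈ K)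
    (t : EuclideanSpace ℝ (Fin d)) : ⟪t, x⟫ ≤ suppFn K t :=
  le_csSup (hK.image (continuous_const.inner continuous_id)).bddAbove ⟨x, hx, rfl⟩

lemma suppFn_le (hne : K.Nonempty) {t : EuclideanSpace ℝ (Fin d)} {c : ℝ}
    (h : ∀ x ∈ K, ⟪t, x⟫ ≤ c) : suppFn K t ≤ c :=
  csSup_le (hne.image _) (by rintro _ ⟨x, hx, rfl⟩; exact h x hx)

theorem mem_iff_forall_inner_le_suppFn (hK : IsCompact K) (hconv : Convex ℝ K)
    (hne : K.Nonempty) (x : EuclideanSpace ℝ (Fin d)) :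
    x ∈ K ↔ ∀ t, ⟪t, x⟫ ≤ suppFn K t := by
  refine ⟨fun hx t => le_suppFn hK hx t, fun h => ?_⟩
  by_contra hx
  obtain ⟨f, c, hf, hfx⟩ := geometric_hahn_banach_closed_point hconv hK.isClosed hx
  set t := (InnerProductSpace.toDual ℝ _).symm f
  have htf : ∀ y, ⟪t, y⟫ = f y := fun y => InnerProductSpace.toDual_symm_apply
  have hle : suppFn K t ≤ c := suppFn_le hne fun y hy => by rw [htf]; exact (hf y hy).le
  linarith [htf x ▸ h t]

theorem image_reflect_eq_iff (hK : IsCompact K) (hconv : Convex ℝ K) (hne : K.Nonempty)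
    (v : EuclideanSpace ℝ (Fin d)) :
    K = (fun x => (2 : ℝ) • v - x) '' K ↔
      ∀ t, suppFn K (-t) - suppFn K t = ⟪(-2 : ℝ) • v, t⟫ := by
  have hinv : Function.Involutive fun x : EuclideanSpace ℝ (Fin d) => (2 : ℝ) • v - x :=
    fun x => sub_sub_cancel _ _
  rw [hinv.image_eq_preimage_symm, Set.ext_iff]
  simp only [Set.mem_preimage, real_inner_smul_left]
  constructor
  · intro hsym t
    have hbound : ∀ s, ∀ x ∈ K, 2 * ⟪s, v⟫ - ⟪s, x⟫ ≤ suppFn K s := fun s x hx => by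
      simpa [inner_sub_right, real_inner_smul_right] using le_suppFn hK ((hsym x).1 hx) s
    have h₁ : suppFn K (-t) ≤ suppFn K t - 2 * ⟪t, v⟫ :=
      suppFn_le hne fun x hx => by linarith [hbound t x hx, inner_neg_left (𝕜 := ℝ) t x]
    have h₂ : suppFn K t ≤ suppFn K (-t) + 2 * ⟪t, v⟫ :=
      suppFn_le hne fun x hx => by
        linarith [hbound (-t) x hx, inner_neg_left (𝕜 := ℝ) t x, inner_neg_left (𝕜 := ℝ) t v]
    linarith [real_inner_comm t v]
  · intro hrel x
    rw [mem_iff_forall_inner_le_suppFn hK hconv hne, mem_iff_forall_inner_le_suppFn hK hconv hne,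
      ← (Equiv.neg _).forall_congr_right]
    refine forall_congr' fun t => ?_
    have h := hrel t
    simp only [Equiv.neg_apply, inner_neg_left, inner_sub_right, real_inner_smul_right]
    constructor <;> intro <;> linarith [real_inner_comm t v]

theorem exists_center_iff (hK : IsCompact K) (hconv : Convex ℝ K) (hne : K.Nonempty) :
    (∃ v, K = (fun x => (2 : ℝ) • v - x) '' K) ↔
      ∃ u, ∀ t, suppFn K (-t) - suppFn K t = ⟪u, t⟫ := by
  simp only [image_reflect_eq_iff hK hconv hne]
  exact ⟨fun ⟨v, hv⟩ => ⟨_, hv⟩, fun ⟨u, hu⟩ => ⟨(-2⁻¹ : ℝ) • u, by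
    simpa only [smul_smul, show (-2 : ℝ) * -2⁻¹ = 1 by norm_num, one_smul] using hu⟩⟩

end SupportFunction

theorem LinearIndependent.exists_linearEquiv_apply_eq {𝕜 V ι : Type*} [Field 𝕜] [AddCommGroup V]
    [Module 𝕜 V] [FiniteDimensional 𝕜 V] {v w : ι → V} (hv : LinearIndependent 𝕜 v)
    (hw : LinearIndependent 𝕜 w) : ∃ L : V ≃ₗ[𝕜] V, ∀ i, L (v i) = w i := by
  obtain ⟨p, hp⟩ := (Submodule.span 𝕜 (range v)).exists_isCompl
  obtain ⟨q, hq⟩ := (Submodule.span 𝕜 (range w)).exists_isCompl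
  let e := (Module.Basis.span hv).equiv (Module.Basis.span hw) (Equiv.refl ι)
  have hpq : Module.finrank 𝕜 p = Module.finrank 𝕜 q := by
    have := Submodule.finrank_add_eq_of_isCompl hp
    have := Submodule.finrank_add_eq_of_isCompl hq
    have := e.finrank_eq
    omega
  refine ⟨(Submodule.prodEquivOfIsCompl _ _ hp).symm ≪≫ₗ e.prodCongr (.ofFinrankEq p q hpq) ≪≫ₗ
    Submodule.prodEquivOfIsCompl _ _ hq, fun i => ?_⟩
  have hvi : v i = (Module.Basis.span hv i : V) := by rw [Module.Basis.span_apply]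
  rw [hvi, LinearEquiv.trans_apply, LinearEquiv.trans_apply,
    Submodule.prodEquivOfIsCompl_symm_apply_left]
  simp only [e, LinearEquiv.prodCongr_apply, map_zero, Submodule.coe_prodEquivOfIsCompl',
    ZeroMemClass.coe_zero, add_zero]
  rw [Module.Basis.equiv_apply, Equiv.refl_apply, Module.Basis.span_apply]

section PairVec

variable {d : ℕ}

lemma pairVec_apply (u v : ℝ) (i : Fin d) :
    pairVec d u v i = if (i : ℕ) = 0 then u else if (i : ℕ) = 1 then v else 0 := rfl

lemma pairVec_one_eq (δ : ℝ) : pairVec d 1 δ = pairVec d 1 0 + δ • pairVec d 0 1 := by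
  ext i
  simp only [PiLp.add_apply, PiLp.smul_apply, pairVec_apply, smul_eq_mul]
  split_ifs <;> simp

lemma linearIndependent_pairVec (hd : 2 ≤ d) :
    LinearIndependent ℝ ![pairVec d 1 0, pairVec d 0 1] := by
  refine LinearIndependent.pair_iff.2 fun s t h => ⟨?_, ?_⟩
  · simpa [pairVec_apply] using congrArg (fun x : EuclideanSpace ℝ (Fin d) => x ⟨0, by omega⟩) h
  · simpa [pairVec_apply] using congrArg (fun x : EuclideanSpace ℝ (Fin d) => x ⟨1, by omega⟩) h

variable (K : Set (EuclideanSpace ℝ (Fin d)))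
  (L : EuclideanSpace ℝ (Fin d) ≃ₗ[ℝ] EuclideanSpace ℝ (Fin d))

lemma iteratedDeriv_fL (δ : ℝ) :
    iteratedDeriv 2 (fL d K L) δ = secondLineDeriv (suppFn K)
      (L (pairVec d 1 0) + δ • L (pairVec d 0 1)) (L (pairVec d 0 1)) := by
  rw [← iteratedDeriv_two_comp_add_smul]
  congr 1
  ext s
  rw [fL, pairVec_one_eq, map_add, map_smul]

lemma iteratedDeriv_fLtilde (δ : ℝ) :
    iteratedDeriv 2 (fLtilde d K L) δ = secondLineDeriv (suppFn K)
      (-(L (pairVec d 1 0) + δ • L (pairVec d 0 1))) (L (pairVec d 0 1)) := by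
  rw [← iteratedDeriv_two_comp_neg_add_smul]
  congr 1
  ext s
  rw [fLtilde, pairVec_one_eq, map_neg, map_add, map_smul]

end PairVec

theorem forall_iteratedDeriv_fL_mul_eq_iff {d : ℕ} (hd : 2 ≤ d)
    (K : Set (EuclideanSpace ℝ (Fin d))) :
    (∀ (L : EuclideanSpace ℝ (Fin d) ≃ₗ[ℝ] EuclideanSpace ℝ (Fin d)) (δ δ' : ℝ),
      iteratedDeriv 2 (fL d K L) δ * iteratedDeriv 2 (fLtilde d K L) δ' =
        iteratedDeriv 2 (fLtilde d K L) δ * iteratedDeriv 2 (fL d K L) δ') ↔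
    ∀ a b : EuclideanSpace ℝ (Fin d), LinearIndependent ℝ ![a, b] → ∀ δ δ' : ℝ,
      secondLineDeriv (suppFn K) (a + δ • b) b * secondLineDeriv (suppFn K) (-(a + δ' • b)) b =
        secondLineDeriv (suppFn K) (-(a + δ • b)) b *
          secondLineDeriv (suppFn K) (a + δ' • b) b := by
  simp only [iteratedDeriv_fL, iteratedDeriv_fLtilde]
  constructor
  · intro h a b hab
    obtain ⟨L, hL⟩ := (linearIndependent_pairVec hd).exists_linearEquiv_apply_eq hab
    have ha : L (pairVec d 1 0) = a := hL 0
    have hb : L (pairVec d 0 1) = b := hL 1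
    rw [← ha, ← hb]
    exact h L
  · refine fun h L => h _ _ (LinearIndependent.pair_iff.2 fun s t hst => ?_)
    refine LinearIndependent.pair_iff.1 (linearIndependent_pairVec hd) s t (L.injective ?_)
    rw [map_add, map_smul, map_smul, hst, map_zero]

theorem second_derivative_ratio_or_symmetric_general
    (d : ℕ) (hd : 2 ≤ d) (C : StrictlyConvexAnalyticBody d) :
    Xor'
      (∃ L : EuclideanSpace ℝ (Fin d) ≃ₗ[ℝ] EuclideanSpace ℝ (Fin d), ∃ δ δ' : ℝ,
        iteratedDeriv 2 (fL d C.carrier L) δ * iteratedDeriv 2 (fLtilde d C.carrier L) δ' ≠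
        iteratedDeriv 2 (fLtilde d C.carrier L) δ * iteratedDeriv 2 (fL d C.carrier L) δ')
      (∃ v : EuclideanSpace ℝ (Fin d),
        C.carrier = (fun x => (2:ℝ) • v - x) '' C.carrier) := by
  have hne : C.carrier.Nonempty := C.nonemptyInterior.mono interior_subset
  have hhom : ∀ μ : ℝ, 0 < μ → ∀ t, suppFn C.carrier (μ • t) = μ * suppFn C.carrier t :=
    fun μ hμ => suppFn_smul C.carrier hμ.le
  refine xor_iff_not_iff'.2 ?_
  rw [exists_center_iff C.isCompact C.convex hne,
    ← secondLineDeriv_neg_eq_iff_exists_inner C.analyticSupport hhom,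
    ← secondLineDeriv_neg_eq_iff_mul_eq hhom C.analyticSupport C.posCurvature,
    ← forall_iteratedDeriv_fL_mul_eq_iff hd]
  push Not
  rfl

theorem second_derivative_ratio_or_symmetric
    (d : ℕ) (hd : 2 ≤ d) (C : StrictlyConvexAnalyticBody d)
    (h0 : (0 : EuclideanSpace ℝ (Fin d)) ∈ interior C.carrier) :
    Xor'
      (∃ L : EuclideanSpace ℝ (Fin d) ≃ₗ[ℝ] EuclideanSpace ℝ (Fin d), ∃ δ δ' : ℝ,
        iteratedDeriv 2 (fL d C.carrier L) δ * iteratedDeriv 2 (fLtilde d C.carrier L) δ' ≠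
        iteratedDeriv 2 (fLtilde d C.carrier L) δ * iteratedDeriv 2 (fL d C.carrier L) δ')
      (∃ v : EuclideanSpace ℝ (Fin d),
        C.carrier = (fun x => (2:ℝ) • v - x) '' C.carrier) :=
  second_derivative_ratio_or_symmetric_general d hd C

end
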